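/- The Dunkl q-Szász-Mirakjan operator satisfies D*_{n,q}(e_1 - x; x) = (q-1)·x, i.e., the first central moment equals (q-1)x. -/
import Mathlib


open Real Filter Topology

noncomputable def theta (k : ℕ) : ℝ := if Even k then 0 else 1

noncomputable def gam (μ q : ℝ) : ℕ → ℝ
  | 0 => 1
  | n + 1 => ((1 - q ^ (2 * μ * theta (n + 1) + (n + 1 : ℝ))) / (1 - q)) * gam μ q n

/-- q-number of a real `a`: `[a]_q = (1-q^a)/(1-q)` (real exponentiation). -/
noncomputable def qnum (q a : ℝ) : ℝ := (1 - q ^ a) / (1 - q)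

/-- q-Dunkl exponential `E_{μ,q}`. -/
noncomputable def Eexp (μ q x : ℝ) : ℝ := ∑' k : ℕ, q ^ (k * (k - 1) / 2) * x ^ k / gam μ q k

/-- nodes of the Dunkl q-Szász-Mirakjan operator. -/
noncomputable def node (μ q : ℝ) (n k : ℕ) : ℝ :=
  (1 - q ^ (2 * μ * theta k + (k : ℝ))) / (q ^ ((k : ℝ) - 2) * (1 - q ^ n))

/-- Dunkl q-Szász-Mirakjan operator `D*_{n,q}`. -/
noncomputable def Dop (μ q : ℝ) (n : ℕ) (f : ℝ → ℝ) (x : ℝ) : ℝ :=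
  (1 / Eexp μ q (qnum q n * x)) *
    ∑' k : ℕ, (qnum q n * x) ^ k / gam μ q k * q ^ (k * (k - 1) / 2) * f (node μ q n k)

lemma theta_nonneg (k : ℕ) : 0 ≤ theta k := by
  unfold theta; split_ifs <;> norm_num

lemma exp_pos' (μ : ℝ) (hμ : 0 < μ) (k : ℕ) :
    (0:ℝ) < 2 * μ * theta (k+1) + ((k:ℝ) + 1) := by
  have h := theta_nonneg (k+1)
  have h2 : (0:ℝ) ≤ 2 * μ * theta (k+1) := by positivity
  have h3 : (0:ℝ) ≤ (k:ℝ) := Nat.cast_nonneg k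
  linarith

lemma exp_ge_one (μ : ℝ) (hμ : 0 < μ) (k : ℕ) :
    (1:ℝ) ≤ 2 * μ * theta (k+1) + ((k:ℝ) + 1) := by
  have h := theta_nonneg (k+1)
  have h2 : (0:ℝ) ≤ 2 * μ * theta (k+1) := by positivity
  have h3 : (0:ℝ) ≤ (k:ℝ) := Nat.cast_nonneg k
  linarith

lemma qpow_lt_one (μ q : ℝ) (hq0 : 0 < q) (hq1 : q < 1) (hμ : 0 < μ) (k : ℕ) :
    q ^ (2 * μ * theta (k+1) + ((k:ℝ) + 1)) < 1 :=
  Real.rpow_lt_one hq0.le hq1 (exp_pos' μ hμ k)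

lemma qpow_le_q (μ q : ℝ) (hq0 : 0 < q) (hq1 : q < 1) (hμ : 0 < μ) (k : ℕ) :
    q ^ (2 * μ * theta (k+1) + ((k:ℝ) + 1)) ≤ q := by
  calc q ^ (2 * μ * theta (k+1) + ((k:ℝ)+1)) ≤ q ^ (1:ℝ) :=
        Real.rpow_le_rpow_of_exponent_ge hq0 hq1.le (exp_ge_one μ hμ k)
    _ = q := Real.rpow_one q

lemma gam_pos (μ q : ℝ) (hq0 : 0 < q) (hq1 : q < 1) (hμ : 0 < μ) :
    ∀ k, 0 < gam μ q k
  | 0 => by simp [gam]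
  | (k+1) => by
    have h1 := qpow_lt_one μ q hq0 hq1 hμ k
    have h2 := gam_pos μ q hq0 hq1 hμ k
    show 0 < ((1 - q ^ (2 * μ * theta (k + 1) + ((k:ℕ) + 1 : ℝ))) / (1 - q)) * gam μ q k
    have hq : (0:ℝ) < 1 - q := by linarith
    exact mul_pos (div_pos (by linarith) hq) h2

lemma tri_succ (k : ℕ) : (k+1)*k/2 = k*(k-1)/2 + k := by
  rcases k with _ | j
  · rfl
  · obtain ⟨m, hm⟩ := Nat.even_mul_succ_self j
    have e1 : (j+1+1)*(j+1) = j*(j+1)+2*(j+1) := by ring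
    have e2 : (j+1)*((j+1)-1) = j*(j+1) := by simp; ring
    rw [e1, e2, hm]
    omega

lemma node_zero (μ q : ℝ) (n : ℕ) : node μ q n 0 = 0 := by
  unfold node theta
  norm_num

lemma a_ratio (μ q : ℝ) (hq0 : 0 < q) (hq1 : q < 1) (hμ : 0 < μ) (c : ℝ) (k : ℕ) :
    c ^ (k+1) / gam μ q (k+1) * q ^ ((k+1)*k/2)
      = (c ^ k / gam μ q k * q ^ (k*(k-1)/2)) *
        (c * q ^ k * ((1 - q) / (1 - q ^ (2*μ*theta (k+1) + ((k:ℝ)+1))))) := by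
  have hG : gam μ q k ≠ 0 := (gam_pos μ q hq0 hq1 hμ k).ne'
  have hA : (1:ℝ) - q ^ (2*μ*theta (k+1) + ((k:ℝ)+1)) ≠ 0 := by
    have := qpow_lt_one μ q hq0 hq1 hμ k; linarith
  have h1q : (1:ℝ) - q ≠ 0 := by linarith
  show c ^ (k+1) / (((1 - q ^ (2 * μ * theta (k + 1) + ((k:ℕ) + 1 : ℝ))) / (1 - q)) * gam μ q k)
      * q ^ ((k+1)*k/2) = _
  rw [tri_succ, pow_add, pow_succ]
  field_simp
  ring

lemma node_key (μ q : ℝ) (hq0 : 0 < q) (hq1 : q < 1) (hμ : 0 < μ) (n : ℕ) (hn : 1 ≤ n)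
    (x : ℝ) (k : ℕ) :
    ((qnum q n * x) ^ (k+1) / gam μ q (k+1) * q ^ ((k+1)*k/2)) * node μ q n (k+1)
      = q * x * ((qnum q n * x) ^ k / gam μ q k * q ^ (k*(k-1)/2)) := by
  have hG : gam μ q k ≠ 0 := (gam_pos μ q hq0 hq1 hμ k).ne'
  have hA : (1:ℝ) - q ^ (2*μ*theta (k+1) + ((k:ℝ)+1)) ≠ 0 := by
    have := qpow_lt_one μ q hq0 hq1 hμ k; linarith
  have h1q : (1:ℝ) - q ≠ 0 := by linarith
  have hB : (1:ℝ) - q ^ n ≠ 0 := by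
    have : q ^ n < 1 := pow_lt_one₀ hq0.le hq1 (by omega)
    linarith
  have hq : q ≠ 0 := hq0.ne'
  have hP : q ^ (((k+1:ℕ):ℝ) - 2) = q ^ k / q := by
    have h1 : ((k+1:ℕ):ℝ) - 2 = (k:ℝ) - 1 := by push_cast; ring
    rw [h1, Real.rpow_sub hq0, Real.rpow_natCast, Real.rpow_one]
  have hqn : q ^ ((n:ℕ):ℝ) = q ^ n := Real.rpow_natCast q n
  unfold node qnum
  rw [hqn]
  show ((1 - q^n)/(1-q) * x) ^ (k+1) / (((1 - q ^ (2 * μ * theta (k + 1) + ((k:ℕ) + 1 : ℝ))) / (1 - q)) * gam μ q k)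
      * q ^ ((k+1)*k/2) * ((1 - q ^ (2 * μ * theta (k+1) + (((k+1):ℕ) : ℝ))) / (q ^ (((k+1:ℕ):ℝ) - 2) * (1 - q ^ n))) = _
  rw [hP, tri_succ, pow_add, pow_succ]
  have hcast : (((k+1):ℕ) : ℝ) = (k:ℝ) + 1 := by push_cast; ring
  rw [hcast]
  field_simp
  ring

theorem Dop_first_central_moment (q μ : ℝ) (hq0 : 0 < q) (hq1 : q < 1) (hμ : 0 < μ)
    (n : ℕ) (hn : 1 ≤ n) (x : ℝ) (hx : 0 ≤ x) :
    Dop μ q n (fun t => t - x) x = (q - 1) * x := by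
  unfold Dop
  set c : ℝ := qnum q n * x with hc
  set a : ℕ → ℝ := fun k => c ^ k / gam μ q k * q ^ (k*(k-1)/2) with ha
  have hGpos := gam_pos μ q hq0 hq1 hμ
  have hc0 : 0 ≤ c := by
    have h1 : (0:ℝ) ≤ qnum q n := by
      unfold qnum
      rw [Real.rpow_natCast]
      have h2 : q ^ n ≤ 1 := pow_le_one₀ hq0.le hq1.le
      have h3 : (0:ℝ) < 1 - q := by linarith
      exact div_nonneg (by linarith) h3.le
    exact mul_nonneg h1 hx
  have hanon : ∀ k, 0 ≤ a k := fun k =>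
    mul_nonneg (div_nonneg (pow_nonneg hc0 k) (hGpos k).le) (pow_nonneg hq0.le _)
  -- summability of the weights
  have hsum : Summable a := by
    apply summable_of_ratio_norm_eventually_le (r := 1/2) (by norm_num)
    have hten : Tendsto (fun k : ℕ => c * q ^ k) atTop (nhds 0) := by
      simpa using (tendsto_pow_atTop_nhds_zero_of_lt_one hq0.le hq1).const_mul c
    filter_upwards [hten.eventually_le_const (by norm_num : (0:ℝ) < 1/2)] with k hk
    rw [Real.norm_of_nonneg (hanon _), Real.norm_of_nonneg (hanon _)]
    have hratio := a_ratio μ q hq0 hq1 hμ c k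
    have hAq := qpow_le_q μ q hq0 hq1 hμ k
    have hA1 := qpow_lt_one μ q hq0 hq1 hμ k
    have hA : (0:ℝ) < 1 - q ^ (2*μ*theta (k+1) + ((k:ℝ)+1)) := by linarith
    have hr1 : (1 - q) / (1 - q ^ (2*μ*theta (k+1) + ((k:ℝ)+1))) ≤ 1 :=
      (div_le_one hA).mpr (by linarith)
    have hr0 : 0 ≤ (1 - q) / (1 - q ^ (2*μ*theta (k+1) + ((k:ℝ)+1))) :=
      div_nonneg (by linarith) hA.le
    have hcq : 0 ≤ c * q ^ k := mul_nonneg hc0 (pow_nonneg hq0.le k)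
    have hstep : c * q ^ k * ((1 - q) / (1 - q ^ (2*μ*theta (k+1) + ((k:ℝ)+1)))) ≤ 1/2 := by
      calc c * q ^ k * ((1 - q) / (1 - q ^ (2*μ*theta (k+1) + ((k:ℝ)+1))))
          ≤ c * q ^ k * 1 := mul_le_mul_of_nonneg_left hr1 hcq
        _ = c * q ^ k := by ring
        _ ≤ 1/2 := hk
    have hexp : a (k+1) = a k * (c * q ^ k * ((1 - q) / (1 - q ^ (2*μ*theta (k+1) + ((k:ℝ)+1))))) := by
      simpa [ha] using hratio
    rw [hexp]
    calc a k * (c * q ^ k * ((1 - q) / (1 - q ^ (2*μ*theta (k+1) + ((k:ℝ)+1)))))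
        ≤ a k * (1/2) := mul_le_mul_of_nonneg_left hstep (hanon k)
      _ = 1/2 * a k := by ring
  -- key shift identity
  have hkey : ∀ k, a (k+1) * node μ q n (k+1) = q * x * a k := by
    intro k
    simpa [ha] using node_key μ q hq0 hq1 hμ n hn x k
  have hT : Summable (fun k => a k * node μ q n k) := by
    rw [← summable_nat_add_iff 1]
    have heq : (fun k : ℕ => a (k+1) * node μ q n (k+1)) = fun k => q * x * a k :=
      funext hkey
    rw [heq]
    exact hsum.mul_left _
  have hE : Eexp μ q c = ∑' k, a k := by
    unfold Eexp
    exact tsum_congr fun k => by rw [ha]; ring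
  have hEge : (1:ℝ) ≤ ∑' k, a k := by
    have h0 : a 0 = 1 := by simp [ha, gam]
    calc (1:ℝ) = a 0 := h0.symm
      _ ≤ ∑' k, a k := Summable.le_tsum hsum 0 fun j _ => hanon j
  have hEne : Eexp μ q c ≠ 0 := by rw [hE]; linarith
  have hsummand : (∑' k : ℕ, c ^ k / gam μ q k * q ^ (k * (k - 1) / 2) *
        ((fun t => t - x) (node μ q n k)))
      = ∑' k : ℕ, (a k * node μ q n k - x * a k) :=
    tsum_congr fun k => by rw [ha]; ring
  rw [hsummand, Summable.tsum_sub hT (hsum.mul_left x)]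
  have hTsum : ∑' k, a k * node μ q n k = q * x * ∑' k, a k := by
    rw [Summable.tsum_eq_zero_add hT]
    have h0 : a 0 * node μ q n 0 = 0 := by rw [node_zero]; ring
    have h1 : (∑' k : ℕ, a (k+1) * node μ q n (k+1)) = ∑' k : ℕ, q * x * a k :=
      tsum_congr hkey
    rw [h0, h1, tsum_mul_left, zero_add]
  rw [hTsum, tsum_mul_left, hE]
  field_simp
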